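/- In the setting of the polyhedron P: if for every point x in the closure Π of P one has ‖x - c‖² ≥ R², or for every such x one has ‖x - c‖² ≤ R², then I ∩ (S \ 𝔘) = ∅, i.e., the intersection of balls I does not meet the part of the sphere S = ∂B outside the union 𝔘. -/

import Mathlib

/-!
On the sphere `S` the power of `x` with respect to `S` vanishes, so a point of `S ∩ (I \ 𝔘)` lies
in the open polyhedron `P` cut out by the radical hyperplanes. Moving such a point slightly along
the ray from `c`, we stay in `P` but leave `S` both inwards and outwards; hence `Π` lies on neither
side of `S`.
-/

open Metric Topology

section Radial

variable {E : Type*} [NormedAddCommGroup E] [NormedSpace ℝ E]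

lemma IsOpen.eventually_nhds_one_add_smul_sub_mem {U : Set E} (hU : IsOpen U) {x : E}
    (hx : x ∈ U) (c : E) : ∀ᶠ t in 𝓝 (1 : ℝ), c + t • (x - c) ∈ U :=
  (by fun_prop : Continuous fun t : ℝ => c + t • (x - c)).continuousAt.preimage_mem_nhds
    (hU.mem_nhds (by simpa using hx))

lemma IsOpen.exists_mem_norm_sub_lt {U : Set E} (hU : IsOpen U) {x c : E} (hx : x ∈ U)
    (hxc : x ≠ c) : ∃ y ∈ U, ‖y - c‖ < ‖x - c‖ := by
  obtain ⟨t, ht, ht₀, ht₁⟩ := ((hU.eventually_nhds_one_add_smul_sub_mem hx c).filter_mono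
    nhdsWithin_le_nhds |>.and (Ioo_mem_nhdsLT zero_lt_one)).exists
  refine ⟨_, ht, ?_⟩
  rw [add_sub_cancel_left, norm_smul, Real.norm_of_nonneg ht₀.le]
  exact mul_lt_of_lt_one_left (norm_pos_iff.2 (sub_ne_zero.2 hxc)) ht₁

lemma IsOpen.exists_mem_norm_sub_gt {U : Set E} (hU : IsOpen U) {x c : E} (hx : x ∈ U)
    (hxc : x ≠ c) : ∃ y ∈ U, ‖x - c‖ < ‖y - c‖ := by
  obtain ⟨t, ht, ht₁⟩ := ((hU.eventually_nhds_one_add_smul_sub_mem hx c).filter_mono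
    nhdsWithin_le_nhds |>.and (self_mem_nhdsWithin (s := Set.Ioi 1))).exists
  refine ⟨_, ht, ?_⟩
  rw [add_sub_cancel_left, norm_smul, Real.norm_of_nonneg (zero_lt_one.trans ht₁).le]
  exact lt_mul_left (norm_pos_iff.2 (sub_ne_zero.2 hxc)) ht₁

end Radial

section RadicalPolyhedron

variable {ι α β : Type*} [Fintype ι]

lemma EuclideanSpace.sum_radical_eq (x a c : EuclideanSpace ℝ ι) :
    ∑ k, (2 * x k - (c k + a k)) * (c k - a k) = ‖x - a‖ ^ 2 - ‖x - c‖ ^ 2 := by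
  simp only [EuclideanSpace.real_norm_sq_eq, ← Finset.sum_sub_distrib, PiLp.sub_apply]
  exact Finset.sum_congr rfl fun k _ => by ring

def radicalPolyhedron (c : EuclideanSpace ℝ ι) (R : ℝ) (ci : α → EuclideanSpace ℝ ι) (Ri : α → ℝ)
    (cj : β → EuclideanSpace ℝ ι) (Rj : β → ℝ) : Set (EuclideanSpace ℝ ι) :=
  {x | (∀ i, ∑ k, (2 * x k - (c k + ci i k)) * (c k - ci i k) + (R^2 - (Ri i)^2) < 0) ∧
    (∀ j, 0 < ∑ k, (2 * x k - (c k + cj j k)) * (c k - cj j k) + (R^2 - (Rj j)^2))}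

variable {c : EuclideanSpace ℝ ι} {R : ℝ} {ci : α → EuclideanSpace ℝ ι} {Ri : α → ℝ}
  {cj : β → EuclideanSpace ℝ ι} {Rj : β → ℝ}

lemma radicalPolyhedron_eq_powers : radicalPolyhedron c R ci Ri cj Rj =
    {x | (∀ i, ‖x - ci i‖ ^ 2 - Ri i ^ 2 < ‖x - c‖ ^ 2 - R ^ 2) ∧
      (∀ j, ‖x - c‖ ^ 2 - R ^ 2 < ‖x - cj j‖ ^ 2 - Rj j ^ 2)} := by
  ext x
  simp only [radicalPolyhedron, EuclideanSpace.sum_radical_eq, Set.mem_ofPred_eq]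
  refine and_congr (forall_congr' fun i => ?_) (forall_congr' fun j => ?_) <;> constructor <;>
    intro h <;> linarith

lemma isOpen_radicalPolyhedron [Finite α] [Finite β] :
    IsOpen (radicalPolyhedron c R ci Ri cj Rj) := by
  rw [radicalPolyhedron_eq_powers, Set.ofPred_and, Set.ofPred_forall, Set.ofPred_forall]
  exact (isOpen_iInter_of_finite fun i => isOpen_lt (by fun_prop) (by fun_prop)).inter
    (isOpen_iInter_of_finite fun j => isOpen_lt (by fun_prop) (by fun_prop))

lemma sphere_inter_diff_subset_radicalPolyhedron (hRj : ∀ j, 0 ≤ Rj j) :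
    sphere c R ∩ ((⋂ i, ball (ci i) (Ri i)) \ ⋃ j, closedBall (cj j) (Rj j)) ⊆
      radicalPolyhedron c R ci Ri cj Rj := by
  rintro x ⟨hS, hI, hU⟩
  rw [mem_sphere_iff_norm] at hS
  simp only [Set.mem_iInter, mem_ball_iff_norm, Set.mem_iUnion, mem_closedBall_iff_norm,
    not_exists, not_le] at hI hU
  rw [radicalPolyhedron_eq_powers]
  refine ⟨fun i => ?_, fun j => ?_⟩ <;> rw [hS, sub_self]
  · exact sub_neg.2 (pow_lt_pow_left₀ (hI i) (norm_nonneg _) two_ne_zero)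
  · exact sub_pos.2 (pow_lt_pow_left₀ (hU j) (hRj j) two_ne_zero)

end RadicalPolyhedron

theorem stmt12_general (n p m : ℕ) (c : EuclideanSpace ℝ (Fin n)) (R : ℝ) (hR : 0 < R)
    (ci : Fin p → EuclideanSpace ℝ (Fin n)) (Ri : Fin p → ℝ)
    (cj : Fin m → EuclideanSpace ℝ (Fin n)) (Rj : Fin m → ℝ)
    (hRj : ∀ j, 0 < Rj j)
    (hB : (∀ x ∈ closure {x | (∀ i, ∑ k, (2 * x k - (c k + ci i k)) * (c k - ci i k) + (R^2 - (Ri i)^2) < 0) ∧ (∀ j, 0 < ∑ k, (2 * x k - (c k + cj j k)) * (c k - cj j k) + (R^2 - (Rj j)^2))}, R^2 ≤ ‖x - c‖^2) ∨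
          (∀ x ∈ closure {x | (∀ i, ∑ k, (2 * x k - (c k + ci i k)) * (c k - ci i k) + (R^2 - (Ri i)^2) < 0) ∧ (∀ j, 0 < ∑ k, (2 * x k - (c k + cj j k)) * (c k - cj j k) + (R^2 - (Rj j)^2))}, ‖x - c‖^2 ≤ R^2)) :
    (⋂ i, ball (ci i) (Ri i)) ∩ (sphere c R \ ⋃ j, closedBall (cj j) (Rj j)) = ∅ := by
  refine Set.eq_empty_of_forall_notMem fun x ⟨hI, hS, hU⟩ => ?_
  have hxP : x ∈ radicalPolyhedron c R ci Ri cj Rj :=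
    sphere_inter_diff_subset_radicalPolyhedron (fun j => (hRj j).le) ⟨hS, hI, hU⟩
  have hxc : x ≠ c := ne_of_mem_sphere hS hR.ne'
  rw [mem_sphere_iff_norm] at hS
  rcases hB with hB | hB
  · obtain ⟨y, hyP, hy⟩ := isOpen_radicalPolyhedron.exists_mem_norm_sub_lt hxP hxc
    rw [hS] at hy
    exact (pow_lt_pow_left₀ hy (norm_nonneg _) two_ne_zero).not_ge (hB y (subset_closure hyP))
  · obtain ⟨y, hyP, hy⟩ := isOpen_radicalPolyhedron.exists_mem_norm_sub_gt hxP hxc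
    rw [hS] at hy
    exact (pow_lt_pow_left₀ hy hR.le two_ne_zero).not_ge (hB y (subset_closure hyP))

theorem stmt12 (n p m : ℕ) (c : EuclideanSpace ℝ (Fin n)) (R : ℝ) (hR : 0 < R)
    (ci : Fin p → EuclideanSpace ℝ (Fin n)) (Ri : Fin p → ℝ)
    (cj : Fin m → EuclideanSpace ℝ (Fin n)) (Rj : Fin m → ℝ)
    (hci : ∀ i, ci i ≠ c) (hcj : ∀ j, cj j ≠ c)
    (hRi : ∀ i, 0 < Ri i) (hRj : ∀ j, 0 < Rj j)
    (hB : (∀ x ∈ closure {x | (∀ i, ∑ k, (2 * x k - (c k + ci i k)) * (c k - ci i k) + (R^2 - (Ri i)^2) < 0) ∧ (∀ j, 0 < ∑ k, (2 * x k - (c k + cj j k)) * (c k - cj j k) + (R^2 - (Rj j)^2))}, R^2 ≤ ‖x - c‖^2) ∨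
          (∀ x ∈ closure {x | (∀ i, ∑ k, (2 * x k - (c k + ci i k)) * (c k - ci i k) + (R^2 - (Ri i)^2) < 0) ∧ (∀ j, 0 < ∑ k, (2 * x k - (c k + cj j k)) * (c k - cj j k) + (R^2 - (Rj j)^2))}, ‖x - c‖^2 ≤ R^2)) :
    (⋂ i, ball (ci i) (Ri i)) ∩ (sphere c R \ ⋃ j, closedBall (cj j) (Rj j)) = ∅ :=
  stmt12_general n p m c R hR ci Ri cj Rj hRj hB
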